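/- Parallelogram law for the value function. Let (Q_j)_{j∈ℕ⁺} ∈ M_{ħ,≫}(H) and (R_j)_{j∈ℕ⁺} ∈ M_{ħ,≫}(U), and assume U_ad(x_0) ≠ ∅ for every x_0 ∈ H. Then for each ℓ ∈ ℕ and all x_0, y_0 ∈ H, V(x_0 + y_0; ℓ) + V(x_0 − y_0; ℓ) = 2(V(x_0;ℓ) + V(y_0;ℓ)). -/
import Mathlib


open scoped RealInnerProductSpace
noncomputable section

namespace ImpulseControl

/-- adjoint of a continuous linear map between real Hilbert spaces -/
def adj {E F : Type*} [NormedAddCommGroup E] [InnerProductSpace ℝ E] [CompleteSpace E]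
    [NormedAddCommGroup F] [InnerProductSpace ℝ F] [CompleteSpace F]
    (f : E →L[ℝ] F) : F →L[ℝ] E :=
  ContinuousLinearMap.adjoint f

/-- `ν(j) = j - [j/ħ]·ħ ∈ {1,…,ħ}` (where `[s] = max {k ∈ ℕ : k < s}`):
equals `ħ` when `ħ ∣ j`, else `j % ħ`. -/
def nu (hbar j : ℕ) : ℕ := if j % hbar = 0 then hbar else j % hbar

variable {H U : Type*} [NormedAddCommGroup H] [InnerProductSpace ℝ H] [CompleteSpace H]
  [NormedAddCommGroup U] [InnerProductSpace ℝ U] [CompleteSpace U]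

/-- a bounded self-adjoint nonnegative operator: membership in `SL₊` -/
def IsNonnegOp {E : Type*} [NormedAddCommGroup E] [InnerProductSpace ℝ E] [CompleteSpace E]
    (P : E →L[ℝ] E) : Prop :=
  IsSelfAdjoint P ∧ ∀ x : E, 0 ≤ ⟪P x, x⟫

/-- membership in `SL_≫`: self-adjoint, nonnegative and coercive -/
def IsCoerciveOp {E : Type*} [NormedAddCommGroup E] [InnerProductSpace ℝ E] [CompleteSpace E]
    (P : E →L[ℝ] E) : Prop :=
  IsNonnegOp P ∧ ∃ δ : ℝ, 0 < δ ∧ ∀ x : E, δ * ‖x‖ ^ 2 ≤ ⟪P x, x⟫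

/-- `M_{ħ,+}`: an `ħ`-periodic sequence of self-adjoint nonnegative operators (indices `j ≥ 1`). -/
def MemMPlus {E : Type*} [NormedAddCommGroup E] [InnerProductSpace ℝ E] [CompleteSpace E]
    (hbar : ℕ) (Q : ℕ → E →L[ℝ] E) : Prop :=
  (∀ j : ℕ, 1 ≤ j → IsNonnegOp (Q j)) ∧ ∀ j : ℕ, 1 ≤ j → Q (j + hbar) = Q j

/-- `M_{ħ,≫}`: an `ħ`-periodic sequence of self-adjoint coercive operators (indices `j ≥ 1`). -/
def MemMCoercive {E : Type*} [NormedAddCommGroup E] [InnerProductSpace ℝ E] [CompleteSpace E]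
    (hbar : ℕ) (Q : ℕ → E →L[ℝ] E) : Prop :=
  (∀ j : ℕ, 1 ≤ j → IsCoerciveOp (Q j)) ∧ ∀ j : ℕ, 1 ≤ j → Q (j + hbar) = Q j

section Defs

variable (T : ℝ → H →L[ℝ] H) (t : ℕ → ℝ) (hbar : ℕ) (B : ℕ → U →L[ℝ] H)

/-- post-impulse states: `xplusFrom T t ħ B ℓ x0 u m = x(t_{ℓ+m}^+ ; x0, u, ℓ)`. -/
def xplusFrom (ℓ : ℕ) (x0 : H) (u : ℕ → U) : ℕ → H
  | 0 => x0
  | m + 1 => T (t (ℓ + m + 1) - t (ℓ + m)) (xplusFrom ℓ x0 u m)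
      + B (nu hbar (ℓ + m + 1)) (u (ℓ + m + 1))

/-- pre-impulse states: `xtrajFrom T t ħ B ℓ x0 u m = x(t_{ℓ+m} ; x0, u, ℓ)` for `m ≥ 1`. -/
def xtrajFrom (ℓ : ℕ) (x0 : H) (u : ℕ → U) : ℕ → H
  | 0 => x0
  | m + 1 => T (t (ℓ + m + 1) - t (ℓ + m)) (xplusFrom T t hbar B ℓ x0 u m)

/-- `x(t_j^+ ; x0, u)` -/
def xplus (x0 : H) (u : ℕ → U) : ℕ → H := xplusFrom T t hbar B 0 x0 u

/-- `x(t_j ; x0, u)` for `j ≥ 1` -/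
def xtraj (x0 : H) (u : ℕ → U) : ℕ → H := xtrajFrom T t hbar B 0 x0 u

/-- the shifted admissible control set `U_ad(x0; ℓ)`; `U_ad(x0) = UadFrom T t ħ B 0 x0` -/
def UadFrom (ℓ : ℕ) (x0 : H) : Set (ℕ → U) :=
  {u | Summable (fun j : ℕ => ‖u (ℓ + j + 1)‖ ^ 2) ∧
       Summable (fun j : ℕ => ‖xtrajFrom T t hbar B ℓ x0 u (j + 1)‖ ^ 2)}

/-- exponential `ħ`-stabilizability of `[A, B_ħ, Λ_ħ]` by an `ħ`-periodic feedback law: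
every closed-loop trajectory decays like `C e^{-μ t}`. -/
def ExpStabilizable : Prop :=
  ∃ F : ℕ → H →L[ℝ] U, ∃ C μ : ℝ, 0 < C ∧ 0 < μ ∧
    ∀ (x0 : H) (u : ℕ → U),
      (∀ j : ℕ, 1 ≤ j → u j = F (nu hbar j) (xtraj T t hbar B x0 u j)) →
      ∀ (j : ℕ) (s : ℝ), t j < s → s ≤ t (j + 1) →
        ‖T (s - t j) (xplus T t hbar B x0 u j)‖ ≤ C * Real.exp (-μ * s) * ‖x0‖

/-- the infinite-horizon cost `J(u; x0, ℓ)` -/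
def Jinf (Q : ℕ → H →L[ℝ] H) (R : ℕ → U →L[ℝ] U) (ℓ : ℕ) (x0 : H) (u : ℕ → U) : ℝ :=
  ∑' m : ℕ,
    (⟪Q (ℓ + m + 1) (xtrajFrom T t hbar B ℓ x0 u (m + 1)), xtrajFrom T t hbar B ℓ x0 u (m + 1)⟫
      + ⟪R (ℓ + m + 1) (u (ℓ + m + 1)), u (ℓ + m + 1)⟫)

/-- the infinite-horizon value function `V(x0; ℓ)` -/
def Vinf (Q : ℕ → H →L[ℝ] H) (R : ℕ → U →L[ℝ] U) (ℓ : ℕ) (x0 : H) : ℝ :=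
  sInf {c : ℝ | ∃ u ∈ UadFrom T t hbar B ℓ x0, c = Jinf T t hbar B Q R ℓ x0 u}

/-- the finite-horizon cost `J(u; x0, ℓ, k̂)` with terminal weight `M` -/
def Jfin (Q : ℕ → H →L[ℝ] H) (R : ℕ → U →L[ℝ] U) (M : H →L[ℝ] H)
    (ℓ khat : ℕ) (x0 : H) (u : ℕ → U) : ℝ :=
  (∑ m ∈ Finset.Icc 1 (khat - ℓ),
    (⟪Q (ℓ + m) (xtrajFrom T t hbar B ℓ x0 u m), xtrajFrom T t hbar B ℓ x0 u m⟫
      + ⟪R (ℓ + m) (u (ℓ + m)), u (ℓ + m)⟫))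
  + ⟪M (xplusFrom T t hbar B ℓ x0 u (khat - ℓ)), xplusFrom T t hbar B ℓ x0 u (khat - ℓ)⟫

/-- the finite-horizon value function `V(x0; ℓ, k̂)` with terminal weight `M` -/
def Vfin (Q : ℕ → H →L[ℝ] H) (R : ℕ → U →L[ℝ] U) (M : H →L[ℝ] H)
    (ℓ khat : ℕ) (x0 : H) : ℝ :=
  sInf {c : ℝ | ∃ u : ℕ → U, Summable (fun j : ℕ => ‖u (ℓ + j + 1)‖ ^ 2) ∧
    c = Jfin T t hbar B Q R M ℓ khat x0 u}

/-- the `k`-th equation of the periodic Riccati-type system, where `G` is the (two-sided)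
inverse of `R_k + B_k* P_k B_k`. -/
def RicEq (Q : ℕ → H →L[ℝ] H) (R : ℕ → U →L[ℝ] U) (P : ℕ → H →L[ℝ] H)
    (G : U →L[ℝ] U) (k : ℕ) : Prop :=
  G ∘L (R k + adj (B k) ∘L P k ∘L B k) = 1 ∧
  (R k + adj (B k) ∘L P k ∘L B k) ∘L G = 1 ∧
  P (k - 1) - adj (T (t k - t (k - 1))) ∘L P k ∘L T (t k - t (k - 1)) =
    adj (T (t k - t (k - 1))) ∘L Q k ∘L T (t k - t (k - 1))
      - adj (T (t k - t (k - 1))) ∘L P k ∘L B k ∘L G ∘L adj (B k) ∘L P k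
          ∘L T (t k - t (k - 1))

/-- `P_0, …, P_ħ` is a solution of the periodic Riccati-type equation. -/
def IsRicSol (Q : ℕ → H →L[ℝ] H) (R : ℕ → U →L[ℝ] U) (P : ℕ → H →L[ℝ] H) : Prop :=
  (∀ k : ℕ, k ≤ hbar → IsNonnegOp (P k)) ∧ P 0 = P hbar ∧
  ∀ k : ℕ, 1 ≤ k → k ≤ hbar → ∃ G : U →L[ℝ] U, RicEq T t B Q R P G k

end Defs


section Aux

variable {H U : Type*} [NormedAddCommGroup H] [InnerProductSpace ℝ H] [CompleteSpace H]
  [NormedAddCommGroup U] [InnerProductSpace ℝ U] [CompleteSpace U]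
variable (T : ℝ → H →L[ℝ] H) (t : ℕ → ℝ) (hbar : ℕ) (B : ℕ → U →L[ℝ] H)

lemma nu_period (hbar j : ℕ) : nu hbar (j + hbar) = nu hbar j := by
  simp [nu, Nat.add_mod_right]

lemma xplusFrom_add (ℓ : ℕ) (x0 y0 : H) (u v : ℕ → U) :
    ∀ m, xplusFrom T t hbar B ℓ (x0 + y0) (fun j => u j + v j) m
      = xplusFrom T t hbar B ℓ x0 u m + xplusFrom T t hbar B ℓ y0 v m
  | 0 => rfl
  | (m+1) => by
      simp only [xplusFrom, xplusFrom_add ℓ x0 y0 u v m, map_add]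
      abel

lemma xplusFrom_sub (ℓ : ℕ) (x0 y0 : H) (u v : ℕ → U) :
    ∀ m, xplusFrom T t hbar B ℓ (x0 - y0) (fun j => u j - v j) m
      = xplusFrom T t hbar B ℓ x0 u m - xplusFrom T t hbar B ℓ y0 v m
  | 0 => rfl
  | (m+1) => by
      simp only [xplusFrom, xplusFrom_sub ℓ x0 y0 u v m, map_sub]
      abel

lemma xplusFrom_smul (c : ℝ) (ℓ : ℕ) (x0 : H) (u : ℕ → U) :
    ∀ m, xplusFrom T t hbar B ℓ (c • x0) (fun j => c • u j) m
      = c • xplusFrom T t hbar B ℓ x0 u m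
  | 0 => rfl
  | (m+1) => by
      simp only [xplusFrom, xplusFrom_smul c ℓ x0 u m, map_smul, smul_add]

lemma xtrajFrom_add (ℓ : ℕ) (x0 y0 : H) (u v : ℕ → U) (m : ℕ) :
    xtrajFrom T t hbar B ℓ (x0 + y0) (fun j => u j + v j) m
      = xtrajFrom T t hbar B ℓ x0 u m + xtrajFrom T t hbar B ℓ y0 v m := by
  cases m with
  | zero => rfl
  | succ m => simp only [xtrajFrom, xplusFrom_add, map_add]

lemma xtrajFrom_sub (ℓ : ℕ) (x0 y0 : H) (u v : ℕ → U) (m : ℕ) :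
    xtrajFrom T t hbar B ℓ (x0 - y0) (fun j => u j - v j) m
      = xtrajFrom T t hbar B ℓ x0 u m - xtrajFrom T t hbar B ℓ y0 v m := by
  cases m with
  | zero => rfl
  | succ m => simp only [xtrajFrom, xplusFrom_sub, map_sub]

lemma xtrajFrom_smul (c : ℝ) (ℓ : ℕ) (x0 : H) (u : ℕ → U) (m : ℕ) :
    xtrajFrom T t hbar B ℓ (c • x0) (fun j => c • u j) m
      = c • xtrajFrom T t hbar B ℓ x0 u m := by
  cases m with
  | zero => rfl
  | succ m => simp only [xtrajFrom, xplusFrom_smul, map_smul]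

lemma xplusFrom_congr (ℓ : ℕ) (x0 : H) (u v : ℕ → U) :
    ∀ m, (∀ j, ℓ < j → j ≤ ℓ + m → u j = v j) →
      xplusFrom T t hbar B ℓ x0 u m = xplusFrom T t hbar B ℓ x0 v m
  | 0, _ => rfl
  | (m+1), h => by
      simp only [xplusFrom]
      rw [xplusFrom_congr ℓ x0 u v m (fun j h1 h2 => h j h1 (by omega)),
        h (ℓ+m+1) (by omega) (by omega)]

lemma xplusFrom_concat (ℓ k : ℕ) (x0 : H) (u : ℕ → U) :
    ∀ m, xplusFrom T t hbar B ℓ x0 u (k + m)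
      = xplusFrom T t hbar B (ℓ + k) (xplusFrom T t hbar B ℓ x0 u k) u m
  | 0 => rfl
  | (m+1) => by
      show xplusFrom T t hbar B ℓ x0 u ((k + m) + 1) = _
      simp only [xplusFrom, xplusFrom_concat ℓ k x0 u m, add_assoc]

lemma xplusFrom_period (htper : ∀ j : ℕ, t (j + hbar) = t j + t hbar)
    (ℓ : ℕ) (x0 : H) (u : ℕ → U) :
    ∀ m, xplusFrom T t hbar B (ℓ + hbar) x0 u m
      = xplusFrom T t hbar B ℓ x0 (fun j => u (j + hbar)) m
  | 0 => rfl
  | (m+1) => by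
      have e1 : ℓ + hbar + m + 1 = (ℓ + m + 1) + hbar := by omega
      have e2 : ℓ + hbar + m = (ℓ + m) + hbar := by omega
      simp only [xplusFrom, xplusFrom_period htper ℓ x0 u m]
      rw [e1, e2, htper (ℓ + m + 1), htper (ℓ + m), nu_period, add_sub_add_right_eq_sub]

lemma xtrajFrom_period (htper : ∀ j : ℕ, t (j + hbar) = t j + t hbar)
    (ℓ : ℕ) (x0 : H) (u : ℕ → U) (m : ℕ) :
    xtrajFrom T t hbar B (ℓ + hbar) x0 u m
      = xtrajFrom T t hbar B ℓ x0 (fun j => u (j + hbar)) m := by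
  cases m with
  | zero => rfl
  | succ m =>
      have e1 : ℓ + hbar + m + 1 = (ℓ + m + 1) + hbar := by omega
      have e2 : ℓ + hbar + m = (ℓ + m) + hbar := by omega
      simp only [xtrajFrom, xplusFrom_period T t hbar B htper]
      rw [e1, e2, htper (ℓ + m + 1), htper (ℓ + m), add_sub_add_right_eq_sub]

lemma exists_period_rep {α : Type*} (hbar : ℕ) (f : ℕ → α)
    (hper : ∀ j, 1 ≤ j → f (j + hbar) = f j) (hh : 0 < hbar) :
    ∀ j, 1 ≤ j → ∃ k, 1 ≤ k ∧ k ≤ hbar ∧ f j = f k := by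
  intro j
  induction j using Nat.strong_induction_on with
  | _ j ih =>
    intro hj
    by_cases hle : j ≤ hbar
    · exact ⟨j, hj, hle, rfl⟩
    · obtain ⟨k, h1, h2, h3⟩ := ih (j - hbar) (by omega) (by omega)
      have hj' : j - hbar + hbar = j := by omega
      exact ⟨k, h1, h2, by rw [← hj', hper _ (by omega), h3]⟩

lemma exists_opnorm_bound {E F : Type*} [NormedAddCommGroup E] [NormedAddCommGroup F]
    [NormedSpace ℝ E] [NormedSpace ℝ F]
    (hbar : ℕ) (hh : 0 < hbar) (Q : ℕ → E →L[ℝ] F)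
    (hper : ∀ j, 1 ≤ j → Q (j + hbar) = Q j) :
    ∃ C : ℝ, ∀ j, 1 ≤ j → ‖Q j‖ ≤ C := by
  refine ⟨∑ k ∈ Finset.Icc 1 hbar, ‖Q k‖, fun j hj => ?_⟩
  obtain ⟨k, h1, h2, h3⟩ := exists_period_rep hbar Q hper hh j hj
  rw [h3]
  exact Finset.single_le_sum (f := fun k => ‖Q k‖) (fun i _ => norm_nonneg _)
    (Finset.mem_Icc.mpr ⟨h1, h2⟩)

lemma tsum_smul_helper {f g : ℕ → ℝ} (c : ℝ) (key : ∀ m, f m = c * g m) :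
    ∑' m, f m = c * ∑' m, g m := by
  rw [← tsum_mul_left]
  exact tsum_congr key

lemma tsum_parallelogram {f g F G : ℕ → ℝ} (hf : Summable f) (hg : Summable g)
    (hF : Summable F) (hG : Summable G) (key : ∀ m, F m + G m = 2 * (f m + g m)) :
    (∑' m, F m) + (∑' m, G m) = 2 * ((∑' m, f m) + (∑' m, g m)) := by
  rw [← Summable.tsum_add hF hG, ← Summable.tsum_add hf hg, ← tsum_mul_left]
  exact tsum_congr key

variable (Q : ℕ → H →L[ℝ] H) (R : ℕ → U →L[ℝ] U)

lemma summable_cost (hQ : MemMCoercive hbar Q) (hR : MemMCoercive hbar R) (hh : 0 < hbar)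
    (ℓ : ℕ) (x0 : H) (u : ℕ → U) (hu : u ∈ UadFrom T t hbar B ℓ x0) :
    Summable (fun m : ℕ =>
      ⟪Q (ℓ + m + 1) (xtrajFrom T t hbar B ℓ x0 u (m + 1)),
        xtrajFrom T t hbar B ℓ x0 u (m + 1)⟫
        + ⟪R (ℓ + m + 1) (u (ℓ + m + 1)), u (ℓ + m + 1)⟫) := by
  obtain ⟨hu1, hu2⟩ := hu
  obtain ⟨Cq, hCq⟩ := exists_opnorm_bound hbar hh Q hQ.2
  obtain ⟨Cr, hCr⟩ := exists_opnorm_bound hbar hh R hR.2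
  refine Summable.of_nonneg_of_le (fun m => ?_) (fun m => ?_)
    ((hu2.mul_left Cq).add (hu1.mul_left Cr))
  · have h1 := ((hQ.1 (ℓ+m+1) (by omega)).1.2) (xtrajFrom T t hbar B ℓ x0 u (m+1))
    have h2 := ((hR.1 (ℓ+m+1) (by omega)).1.2) (u (ℓ+m+1))
    linarith
  · have b1 : ⟪Q (ℓ+m+1) (xtrajFrom T t hbar B ℓ x0 u (m+1)),
        xtrajFrom T t hbar B ℓ x0 u (m+1)⟫ ≤ Cq * ‖xtrajFrom T t hbar B ℓ x0 u (m+1)‖^2 := by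
      have i1 := real_inner_le_norm (Q (ℓ+m+1) (xtrajFrom T t hbar B ℓ x0 u (m+1)))
        (xtrajFrom T t hbar B ℓ x0 u (m+1))
      have i2 := (Q (ℓ+m+1)).le_opNorm (xtrajFrom T t hbar B ℓ x0 u (m+1))
      have i3 := hCq (ℓ+m+1) (by omega)
      nlinarith [norm_nonneg (xtrajFrom T t hbar B ℓ x0 u (m+1)),
        norm_nonneg (Q (ℓ+m+1) (xtrajFrom T t hbar B ℓ x0 u (m+1)))]
    have b2 : ⟪R (ℓ+m+1) (u (ℓ+m+1)), u (ℓ+m+1)⟫ ≤ Cr * ‖u (ℓ+m+1)‖^2 := by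
      have i1 := real_inner_le_norm (R (ℓ+m+1) (u (ℓ+m+1))) (u (ℓ+m+1))
      have i2 := (R (ℓ+m+1)).le_opNorm (u (ℓ+m+1))
      have i3 := hCr (ℓ+m+1) (by omega)
      nlinarith [norm_nonneg (u (ℓ+m+1)), norm_nonneg (R (ℓ+m+1) (u (ℓ+m+1)))]
    linarith

lemma Uad_add {ℓ : ℕ} {x0 y0 : H} {u v : ℕ → U}
    (hu : u ∈ UadFrom T t hbar B ℓ x0) (hv : v ∈ UadFrom T t hbar B ℓ y0) :
    (fun j => u j + v j) ∈ UadFrom T t hbar B ℓ (x0 + y0) := by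
  obtain ⟨hu1, hu2⟩ := hu
  obtain ⟨hv1, hv2⟩ := hv
  constructor
  · refine Summable.of_nonneg_of_le (fun j => by positivity) (fun j => ?_)
      ((hu1.mul_left 2).add (hv1.mul_left 2))
    nlinarith [norm_add_le (u (ℓ+j+1)) (v (ℓ+j+1)), norm_nonneg (u (ℓ+j+1) + v (ℓ+j+1)),
      sq_nonneg (‖u (ℓ+j+1)‖ - ‖v (ℓ+j+1)‖), norm_nonneg (u (ℓ+j+1)), norm_nonneg (v (ℓ+j+1))]
  · refine Summable.of_nonneg_of_le (fun j => by positivity) (fun j => ?_)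
      ((hu2.mul_left 2).add (hv2.mul_left 2))
    rw [xtrajFrom_add]
    nlinarith [norm_add_le (xtrajFrom T t hbar B ℓ x0 u (j+1)) (xtrajFrom T t hbar B ℓ y0 v (j+1)),
      norm_nonneg (xtrajFrom T t hbar B ℓ x0 u (j+1) + xtrajFrom T t hbar B ℓ y0 v (j+1)),
      sq_nonneg (‖xtrajFrom T t hbar B ℓ x0 u (j+1)‖ - ‖xtrajFrom T t hbar B ℓ y0 v (j+1)‖),
      norm_nonneg (xtrajFrom T t hbar B ℓ x0 u (j+1)), norm_nonneg (xtrajFrom T t hbar B ℓ y0 v (j+1))]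

lemma Uad_sub {ℓ : ℕ} {x0 y0 : H} {u v : ℕ → U}
    (hu : u ∈ UadFrom T t hbar B ℓ x0) (hv : v ∈ UadFrom T t hbar B ℓ y0) :
    (fun j => u j - v j) ∈ UadFrom T t hbar B ℓ (x0 - y0) := by
  obtain ⟨hu1, hu2⟩ := hu
  obtain ⟨hv1, hv2⟩ := hv
  constructor
  · refine Summable.of_nonneg_of_le (fun j => by positivity) (fun j => ?_)
      ((hu1.mul_left 2).add (hv1.mul_left 2))
    nlinarith [norm_sub_le (u (ℓ+j+1)) (v (ℓ+j+1)), norm_nonneg (u (ℓ+j+1) - v (ℓ+j+1)),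
      sq_nonneg (‖u (ℓ+j+1)‖ - ‖v (ℓ+j+1)‖), norm_nonneg (u (ℓ+j+1)), norm_nonneg (v (ℓ+j+1))]
  · refine Summable.of_nonneg_of_le (fun j => by positivity) (fun j => ?_)
      ((hu2.mul_left 2).add (hv2.mul_left 2))
    rw [xtrajFrom_sub]
    nlinarith [norm_sub_le (xtrajFrom T t hbar B ℓ x0 u (j+1)) (xtrajFrom T t hbar B ℓ y0 v (j+1)),
      norm_nonneg (xtrajFrom T t hbar B ℓ x0 u (j+1) - xtrajFrom T t hbar B ℓ y0 v (j+1)),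
      sq_nonneg (‖xtrajFrom T t hbar B ℓ x0 u (j+1)‖ - ‖xtrajFrom T t hbar B ℓ y0 v (j+1)‖),
      norm_nonneg (xtrajFrom T t hbar B ℓ x0 u (j+1)), norm_nonneg (xtrajFrom T t hbar B ℓ y0 v (j+1))]

lemma Uad_smul {ℓ : ℕ} {x0 : H} {u : ℕ → U} (c : ℝ)
    (hu : u ∈ UadFrom T t hbar B ℓ x0) :
    (fun j => c • u j) ∈ UadFrom T t hbar B ℓ (c • x0) := by
  obtain ⟨hu1, hu2⟩ := hu
  constructor
  · refine (hu1.mul_left (c^2)).congr fun j => ?_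
    rw [norm_smul]
    simp [mul_pow, sq_abs]
  · refine (hu2.mul_left (c^2)).congr fun j => ?_
    rw [xtrajFrom_smul, norm_smul]
    simp [mul_pow, sq_abs]

lemma Jinf_nonneg (hQ : MemMCoercive hbar Q) (hR : MemMCoercive hbar R)
    (ℓ : ℕ) (x0 : H) (u : ℕ → U) : 0 ≤ Jinf T t hbar B Q R ℓ x0 u :=
  tsum_nonneg fun m => add_nonneg ((hQ.1 (ℓ+m+1) (by omega)).1.2 _)
    ((hR.1 (ℓ+m+1) (by omega)).1.2 _)

lemma Jinf_smul (c : ℝ) (ℓ : ℕ) (x0 : H) (u : ℕ → U) :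
    Jinf T t hbar B Q R ℓ (c • x0) (fun j => c • u j)
      = c^2 * Jinf T t hbar B Q R ℓ x0 u := by
  unfold Jinf
  refine tsum_smul_helper (c^2) fun m => ?_
  rw [xtrajFrom_smul]
  simp only [map_smul, real_inner_smul_left, real_inner_smul_right]
  ring

lemma Jinf_parallelogram (hQ : MemMCoercive hbar Q) (hR : MemMCoercive hbar R) (hh : 0 < hbar)
    {ℓ : ℕ} {x0 y0 : H} {u v : ℕ → U}
    (hu : u ∈ UadFrom T t hbar B ℓ x0) (hv : v ∈ UadFrom T t hbar B ℓ y0) :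
    Jinf T t hbar B Q R ℓ (x0 + y0) (fun j => u j + v j)
      + Jinf T t hbar B Q R ℓ (x0 - y0) (fun j => u j - v j)
      = 2 * (Jinf T t hbar B Q R ℓ x0 u + Jinf T t hbar B Q R ℓ y0 v) := by
  have hF := summable_cost T t hbar B Q R hQ hR hh ℓ (x0+y0) _ (Uad_add T t hbar B hu hv)
  have hG := summable_cost T t hbar B Q R hQ hR hh ℓ (x0-y0) _ (Uad_sub T t hbar B hu hv)
  have hf := summable_cost T t hbar B Q R hQ hR hh ℓ x0 u hu
  have hg := summable_cost T t hbar B Q R hQ hR hh ℓ y0 v hv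
  unfold Jinf
  refine tsum_parallelogram hf hg hF hG fun m => ?_
  rw [xtrajFrom_add, xtrajFrom_sub]
  simp only [map_add, map_sub, inner_add_left, inner_add_right, inner_sub_left, inner_sub_right]
  ring

lemma Uad_shift (htper : ∀ j : ℕ, t (j + hbar) = t j + t hbar) (ℓ : ℕ) (x0 : H)
    (h : (UadFrom T t hbar B ℓ x0).Nonempty) :
    (UadFrom T t hbar B (ℓ + hbar) x0).Nonempty := by
  obtain ⟨u, hu1, hu2⟩ := h
  refine ⟨fun j => u (j - hbar), ?_, ?_⟩
  · refine hu1.congr fun j => ?_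
    have e : ℓ + hbar + j + 1 - hbar = ℓ + j + 1 := by omega
    simp only [e]
  · refine hu2.congr fun j => ?_
    simp only [xtrajFrom_period T t hbar B htper, Nat.add_sub_cancel]

lemma Uad_mult (htper : ∀ j : ℕ, t (j + hbar) = t j + t hbar)
    (hAd : ∀ x0 : H, (UadFrom T t hbar B 0 x0).Nonempty) :
    ∀ n (x0 : H), (UadFrom T t hbar B (hbar * n) x0).Nonempty := by
  intro n
  induction n with
  | zero => simpa using hAd
  | succ n ih =>
    intro x0
    have e : hbar * (n+1) = hbar * n + hbar := by ring
    rw [e]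
    exact Uad_shift T t hbar B htper _ x0 (ih x0)

lemma Uad_nonempty (hh : 0 < hbar) (htper : ∀ j : ℕ, t (j + hbar) = t j + t hbar)
    (hAd : ∀ x0 : H, (UadFrom T t hbar B 0 x0).Nonempty) (ℓ : ℕ) (x0 : H) :
    (UadFrom T t hbar B ℓ x0).Nonempty := by
  classical
  set k := hbar * ℓ - ℓ with hkdef
  have hlk : ℓ + k = hbar * ℓ := by
    have : ℓ ≤ hbar * ℓ := Nat.le_mul_of_pos_left ℓ hh
    omega
  set y := xplusFrom T t hbar B ℓ x0 (fun _ => 0) k with hy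
  obtain ⟨v, hv1, hv2⟩ : (UadFrom T t hbar B (ℓ + k) y).Nonempty := by
    rw [hlk]; exact Uad_mult T t hbar B htper hAd ℓ y
  set u : ℕ → U := fun j => if j ≤ ℓ + k then 0 else v j with hudef
  have hplus : ∀ m, xplusFrom T t hbar B ℓ x0 u (k + m)
      = xplusFrom T t hbar B (ℓ + k) y v m := by
    intro m
    rw [xplusFrom_concat]
    have h1 : xplusFrom T t hbar B ℓ x0 u k = y := by
      rw [hy]
      exact xplusFrom_congr T t hbar B ℓ x0 u _ k
        (fun j hj1 hj2 => by simp [hudef, if_pos hj2])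
    rw [h1]
    exact xplusFrom_congr T t hbar B (ℓ+k) y u v m
      (fun j hj1 hj2 => by simp [hudef, if_neg (by omega : ¬ j ≤ ℓ + k)])
  have htraj : ∀ m, xtrajFrom T t hbar B ℓ x0 u (k + m + 1)
      = xtrajFrom T t hbar B (ℓ + k) y v (m + 1) := by
    intro m
    show xtrajFrom T t hbar B ℓ x0 u ((k + m) + 1) = _
    simp only [xtrajFrom, hplus m, add_assoc]
  refine ⟨u, ?_, ?_⟩
  · refine (summable_nat_add_iff k).mp (hv1.congr fun n => ?_)
    have h1 : ¬ (ℓ + (n + k) + 1 ≤ ℓ + k) := by omega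
    have h2 : ℓ + (n + k) + 1 = ℓ + k + n + 1 := by omega
    simp only [hudef, h2, if_neg (by omega : ¬ (ℓ + k + n + 1 ≤ ℓ + k))]
  · refine (summable_nat_add_iff k).mp (hv2.congr fun n => ?_)
    have h2 : n + k + 1 = k + n + 1 := by omega
    rw [h2, htraj n]

end Aux

/-- The infinite-horizon value function satisfies the parallelogram law. -/
theorem value_function_parallelogram
    {H U : Type*} [NormedAddCommGroup H] [InnerProductSpace ℝ H]
    [CompleteSpace H] [NormedAddCommGroup U] [InnerProductSpace ℝ U] [CompleteSpace U]
    (T : ℝ → H →L[ℝ] H) (hT0 : T 0 = 1)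
    (hTadd : ∀ a b : ℝ, 0 ≤ a → 0 ≤ b → T (a + b) = T a ∘L T b)
    (hTcont : ∀ x : H, ContinuousOn (fun τ : ℝ => T τ x) (Set.Ici (0 : ℝ)))
    (hbar : ℕ) (hhbar : 0 < hbar)
    (t : ℕ → ℝ) (ht0 : t 0 = 0) (htmono : StrictMono t)
    (htper : ∀ j : ℕ, t (j + hbar) = t j + t hbar)
    (B : ℕ → U →L[ℝ] H)
    (Q : ℕ → H →L[ℝ] H) (R : ℕ → U →L[ℝ] U)
    (hQ : MemMCoercive hbar Q) (hR : MemMCoercive hbar R)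
    (hAd : ∀ x0 : H, (UadFrom T t hbar B 0 x0).Nonempty) :
    ∀ (ℓ : ℕ) (x0 y0 : H),
      Vinf T t hbar B Q R ℓ (x0 + y0) + Vinf T t hbar B Q R ℓ (x0 - y0) =
        2 * (Vinf T t hbar B Q R ℓ x0 + Vinf T t hbar B Q R ℓ y0) := by
  intro ℓ x0 y0
  classical
  set S : H → Set ℝ := fun z =>
    {c : ℝ | ∃ u ∈ UadFrom T t hbar B ℓ z, c = Jinf T t hbar B Q R ℓ z u} with hSdef
  have hne : ∀ z : H, (S z).Nonempty := by
    intro z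
    obtain ⟨u, hu⟩ := Uad_nonempty T t hbar B hhbar htper hAd ℓ z
    exact ⟨_, u, hu, rfl⟩
  have hbd : ∀ z : H, BddBelow (S z) := by
    intro z
    refine ⟨0, ?_⟩
    rintro c ⟨u, hu, rfl⟩
    exact Jinf_nonneg T t hbar B Q R hQ hR ℓ z u
  have hVle : ∀ (z : H) (c : ℝ), c ∈ S z → Vinf T t hbar B Q R ℓ z ≤ c := fun z c hc =>
    csInf_le (hbd z) hc
  have ineq : ∀ a b : H,
      Vinf T t hbar B Q R ℓ (a + b) + Vinf T t hbar B Q R ℓ (a - b)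
        ≤ 2 * (Vinf T t hbar B Q R ℓ a + Vinf T t hbar B Q R ℓ b) := by
    intro a b
    have step : ∀ ca ∈ S a, ∀ cb ∈ S b,
        Vinf T t hbar B Q R ℓ (a + b) + Vinf T t hbar B Q R ℓ (a - b) ≤ 2 * ca + 2 * cb := by
      rintro ca ⟨u, hu, rfl⟩ cb ⟨v, hv, rfl⟩
      have h1 : Vinf T t hbar B Q R ℓ (a + b)
          ≤ Jinf T t hbar B Q R ℓ (a + b) (fun j => u j + v j) :=
        hVle _ _ ⟨_, Uad_add T t hbar B hu hv, rfl⟩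
      have h2 : Vinf T t hbar B Q R ℓ (a - b)
          ≤ Jinf T t hbar B Q R ℓ (a - b) (fun j => u j - v j) :=
        hVle _ _ ⟨_, Uad_sub T t hbar B hu hv, rfl⟩
      have h3 := Jinf_parallelogram T t hbar B Q R hQ hR hhbar hu hv
      linarith
    have step2 : ∀ cb ∈ S b,
        Vinf T t hbar B Q R ℓ (a + b) + Vinf T t hbar B Q R ℓ (a - b)
          ≤ 2 * Vinf T t hbar B Q R ℓ a + 2 * cb := by
      intro cb hcb
      have hlb : (Vinf T t hbar B Q R ℓ (a + b) + Vinf T t hbar B Q R ℓ (a - b) - 2 * cb) / 2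
          ≤ Vinf T t hbar B Q R ℓ a :=
        le_csInf (hne a) (fun ca hca => by linarith [step ca hca cb hcb])
      linarith
    have hlb : (Vinf T t hbar B Q R ℓ (a + b) + Vinf T t hbar B Q R ℓ (a - b)
        - 2 * Vinf T t hbar B Q R ℓ a) / 2 ≤ Vinf T t hbar B Q R ℓ b :=
      le_csInf (hne b) (fun cb hcb => by linarith [step2 cb hcb])
    linarith
  have hsc : ∀ z : H, Vinf T t hbar B Q R ℓ ((2:ℝ) • z) = 4 * Vinf T t hbar B Q R ℓ z := by
    intro z
    have h1 : Vinf T t hbar B Q R ℓ ((2:ℝ) • z) ≤ 4 * Vinf T t hbar B Q R ℓ z := by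
      have hlb : Vinf T t hbar B Q R ℓ ((2:ℝ) • z) / 4 ≤ Vinf T t hbar B Q R ℓ z := by
        refine le_csInf (hne z) ?_
        rintro c ⟨u, hu, rfl⟩
        have hm : ((2:ℝ)^2 * Jinf T t hbar B Q R ℓ z u) ∈ S ((2:ℝ) • z) :=
          ⟨fun j => (2:ℝ) • u j, Uad_smul T t hbar B 2 hu,
            (Jinf_smul T t hbar B Q R 2 ℓ z u).symm⟩
        have := hVle _ _ hm
        norm_num at this ⊢
        linarith
      linarith
    have h2 : 4 * Vinf T t hbar B Q R ℓ z ≤ Vinf T t hbar B Q R ℓ ((2:ℝ) • z) := by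
      refine le_csInf (hne ((2:ℝ) • z)) ?_
      rintro c ⟨u, hu, rfl⟩
      have hw : (fun j => (2:ℝ)⁻¹ • u j) ∈ UadFrom T t hbar B ℓ z := by
        have h := Uad_smul T t hbar B ((2:ℝ)⁻¹) hu
        rw [smul_smul, show ((2:ℝ)⁻¹ * 2) = 1 by norm_num, one_smul] at h
        exact h
      have hVz : Vinf T t hbar B Q R ℓ z
          ≤ Jinf T t hbar B Q R ℓ z (fun j => (2:ℝ)⁻¹ • u j) := hVle _ _ ⟨_, hw, rfl⟩
      have e : Jinf T t hbar B Q R ℓ ((2:ℝ) • z) u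
          = (2:ℝ)^2 * Jinf T t hbar B Q R ℓ z (fun j => (2:ℝ)⁻¹ • u j) := by
        have hue : u = fun j => (2:ℝ) • ((2:ℝ)⁻¹ • u j) :=
          funext fun j => by rw [smul_smul]; norm_num
        conv_lhs => rw [hue]
        exact Jinf_smul T t hbar B Q R 2 ℓ z (fun j => (2:ℝ)⁻¹ • u j)
      rw [e]
      norm_num
      linarith
    linarith
  have i1 := ineq x0 y0
  have i2 := ineq (x0 + y0) (x0 - y0)
  have e1 : (x0 + y0) + (x0 - y0) = (2:ℝ) • x0 := by rw [two_smul]; abel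
  have e2 : (x0 + y0) - (x0 - y0) = (2:ℝ) • y0 := by rw [two_smul]; abel
  rw [e1, e2, hsc x0, hsc y0] at i2
  linarith


end ImpulseControl
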